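/- Let n ≥ 2, M = Mₙ the n-fuse function. For x ≥ 0 and 0 ≤ i < n, define the interval Jᵢ(x) = [x − tᵢ(x), x + tᵢ(x)/i) (with t₀(x)/0 = +∞ for i = 0) and the linear map lᵢˣ(y) = (i·x + tᵢ(x) + y)/(i+1). Then for every y ∈ Jᵢ(x), t_{i+1}(lᵢˣ(y)) = M(y). -/
import Mathlib


/-- Auxiliary values of the `n`-fuse function: `t₀(x) = 1`,
`t_{i+1}(x) = M(x - tᵢ(x))`. -/
def tfun (M : ℝ → ℝ) (x : ℝ) : ℕ → ℝ
  | 0 => 1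
  | i + 1 => M (x - tfun M x i)

namespace FuseAux

variable {n : ℕ} {M : ℝ → ℝ}

lemma tfun_zero (M : ℝ → ℝ) (x : ℝ) : tfun M x 0 = 1 := rfl

lemma tfun_succ (M : ℝ → ℝ) (x : ℝ) (j : ℕ) :
    tfun M x (j + 1) = M (x - tfun M x j) := rfl

/-- `M` has slope `-1` on `[v, v + M v)`. -/
def GoodPt (M : ℝ → ℝ) (v : ℝ) : Prop :=
  ∀ d : ℝ, 0 ≤ d → d < M v → M (v + d) = M v - d

lemma tpos (hpos : ∀ x : ℝ, 0 < M x) (x : ℝ) (j : ℕ) : 0 < tfun M x j := by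
  cases j with
  | zero => exact one_pos
  | succ j => exact hpos _

lemma gneg (hneg : ∀ x : ℝ, x < 0 → M x = -x) (v : ℝ) (hv : v < 0) : GoodPt M v := by
  intro d hd0 hdM
  have hMv : M v = -v := hneg v hv
  have hvd : v + d < 0 := by rw [hMv] at hdM; linarith
  rw [hneg _ hvd, hMv]
  ring

/-- If all the children `u - tⱼ(u)` are good points, then `u` satisfies
`tⱼ(u) ≥ j * M u` and is itself a good point. -/
lemma children (hn : 2 ≤ n)
    (heq : ∀ x : ℝ, 0 ≤ x → M x = tfun M x n / n)
    (hpos : ∀ x : ℝ, 0 < M x)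
    (u : ℝ) (hu : 0 ≤ u)
    (Hch : ∀ j, j < n → GoodPt M (u - tfun M u j)) :
    (∀ j, j ≤ n → (j : ℝ) * M u ≤ tfun M u j) ∧ GoodPt M u := by
  have hn0 : (0:ℝ) < n := by exact_mod_cast (by omega : 0 < n)
  have htn : tfun M u n = (n:ℝ) * M u := by
    rw [heq u hu]; field_simp
  have G : ∀ j, j ≤ n → (j:ℝ) * M u ≤ tfun M u j := by
    have down : ∀ m, m ≤ n → ((n - m : ℕ):ℝ) * M u ≤ tfun M u (n - m) := by
      intro m
      induction m with
      | zero =>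
        intro _
        simp only [Nat.sub_zero]
        rw [htn]
      | succ m ih =>
        intro hm
        have ihm := ih (by omega)
        set j := n - (m+1) with hjdef
        have hj1 : n - m = j + 1 := by omega
        rw [hj1] at ihm
        have hjn : j < n := by omega
        have hMu : 0 < M u := hpos u
        have htj : 0 < tfun M u j := tpos hpos u j
        have e1 : tfun M u (j+1) = M (u - tfun M u j) := rfl
        rw [e1] at ihm
        push_cast at ihm ⊢
        rcases le_or_gt (M (u - tfun M u j)) (tfun M u j) with h | h
        · linarith
        · have hgp := Hch j hjn (tfun M u j) htj.le h
          rw [show u - tfun M u j + tfun M u j = u by ring] at hgp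
          linarith
    intro j hj
    have := down (n - j) (by omega)
    rwa [Nat.sub_sub_self hj] at this
  refine ⟨G, ?_⟩
  intro d hd0 hdM
  have hstep : ∀ j, j ≤ n → tfun M (u + d) j = tfun M u j - (j:ℝ) * d := by
    intro j
    induction j with
    | zero => intro _; simp [tfun_zero]
    | succ j ih =>
      intro hj
      have ihj := ih (by omega)
      have e1 : tfun M u (j+1) = M (u - tfun M u j) := rfl
      have hcond : ((j:ℝ)+1) * d < M (u - tfun M u j) := by
        rw [← e1]
        have h1 := G (j+1) hj
        push_cast at h1
        have hMu := hpos u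
        have hjpos : (0:ℝ) < (j:ℝ) + 1 := by positivity
        nlinarith [mul_lt_mul_of_pos_left hdM hjpos]
      have hgp := Hch j (by omega) (((j:ℝ)+1) * d)
        (mul_nonneg (by positivity) hd0) hcond
      rw [tfun_succ, ihj,
        show u + d - (tfun M u j - (j:ℝ)*d) = (u - tfun M u j) + ((j:ℝ)+1)*d by ring,
        hgp, ← e1]
      push_cast; ring
  have h1 := heq (u + d) (by linarith)
  rw [hstep n le_rfl, htn] at h1
  rw [h1]
  field_simp

lemma goodAll (hn : 2 ≤ n)
    (hneg : ∀ x : ℝ, x < 0 → M x = -x)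
    (heq : ∀ x : ℝ, 0 ≤ x → M x = tfun M x n / n)
    (hpos : ∀ x : ℝ, 0 < M x) :
    ∀ v : ℝ, GoodPt M v := by
  by_contra hcon
  push_neg at hcon
  obtain ⟨v₀, hv₀⟩ := hcon
  set F : Set ℝ := {v | ¬ GoodPt M v} with hF
  have hFnn : ∀ v ∈ F, (0:ℝ) ≤ v := by
    intro v hv
    by_contra hv'
    exact hv (gneg hneg v (by linarith))
  have hne : F.Nonempty := ⟨v₀, hv₀⟩
  have hbdd : BddBelow F := ⟨0, fun v hv => hFnn v hv⟩
  set s := sInf F with hsdef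
  have hs0 : 0 ≤ s := le_csInf hne hFnn
  have hlt : ∀ v : ℝ, v < s → GoodPt M v := by
    intro v hv
    by_contra hbad
    have : s ≤ v := csInf_le hbdd (show v ∈ F from hbad)
    linarith
  have hchs : ∀ j, j < n → GoodPt M (s - tfun M s j) := by
    intro j _
    exact hlt _ (by linarith [tpos hpos s j])
  obtain ⟨Gs, Goods⟩ := children hn heq hpos s hs0 hchs
  have hMs : 0 < M s := hpos s
  have hn0 : (0:ℝ) < n := by exact_mod_cast (by omega : 0 < n)
  set ε := min 1 (M s / n) with hεdef
  have hε : 0 < ε := lt_min one_pos (div_pos hMs hn0)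
  have claim : ∀ u : ℝ, s ≤ u → u < s + ε → GoodPt M u := by
    intro u hsu hue
    have hδ0 : 0 ≤ u - s := by linarith
    have hδ1 : u - s < 1 := by
      have : ε ≤ 1 := min_le_left _ _
      linarith
    have hδ2 : (n:ℝ) * (u - s) < M s := by
      have h1 : ε ≤ M s / n := min_le_right _ _
      have h2 : u - s < M s / n := by linarith
      calc (n:ℝ)*(u-s) < n * (M s / n) := mul_lt_mul_of_pos_left h2 hn0
        _ = M s := by field_simp
    have hδMs : u - s < M s := by
      have hone : (1:ℝ) ≤ (n:ℝ) := by exact_mod_cast (by omega : 1 ≤ n)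
      nlinarith
    have ht : ∀ j, j < n → tfun M u j = tfun M s j - (j:ℝ) * (u - s) := by
      intro j
      induction j with
      | zero => intro _; simp [tfun_zero]
      | succ j ih =>
        intro hj
        have ihj := ih (by omega)
        have e1 : tfun M s (j+1) = M (s - tfun M s j) := rfl
        have hsj : s - tfun M s j < s := by linarith [tpos hpos s j]
        have hcond : ((j:ℝ)+1) * (u - s) < M (s - tfun M s j) := by
          rw [← e1]
          have h1 := Gs (j+1) (by omega)
          push_cast at h1
          have hjpos : (0:ℝ) < (j:ℝ)+1 := by positivity
          nlinarith [mul_lt_mul_of_pos_left hδMs hjpos]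
        have hgp := hlt _ hsj (((j:ℝ)+1)*(u-s)) (mul_nonneg (by positivity) hδ0) hcond
        rw [tfun_succ, ihj,
          show u - (tfun M s j - (j:ℝ)*(u-s)) = (s - tfun M s j) + ((j:ℝ)+1)*(u-s) by ring,
          hgp, ← e1]
        push_cast; ring
    have hch : ∀ j, j < n → GoodPt M (u - tfun M u j) := by
      intro j hj
      apply hlt
      rw [ht j hj]
      rcases Nat.eq_zero_or_pos j with h0 | h1
      · subst h0
        simp only [tfun_zero, Nat.cast_zero]
        linarith
      · have hj1 : (1:ℝ) ≤ (j:ℝ) := by exact_mod_cast h1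
        have hjn' : (j:ℝ)+1 ≤ (n:ℝ) := by exact_mod_cast (by omega : j+1 ≤ n)
        have hGj := Gs j (by omega)
        have k1 : ((j:ℝ)+1)*(u-s) ≤ (n:ℝ)*(u-s) := mul_le_mul_of_nonneg_right hjn' hδ0
        have k2 : (1:ℝ)*M s ≤ (j:ℝ)*M s := mul_le_mul_of_nonneg_right hj1 hMs.le
        nlinarith
    exact (children hn heq hpos u (by linarith) hch).2
  have hex : ∃ f ∈ F, f < s + ε := by
    by_contra hcon2
    push_neg at hcon2
    have : s + ε ≤ s := le_csInf hne hcon2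
    linarith
  obtain ⟨f, hfF, hfε⟩ := hex
  exact hfF (claim f (csInf_le hbdd hfF) hfε)

lemma Gglobal (hn : 2 ≤ n)
    (hneg : ∀ x : ℝ, x < 0 → M x = -x)
    (heq : ∀ x : ℝ, 0 ≤ x → M x = tfun M x n / n)
    (hpos : ∀ x : ℝ, 0 < M x)
    (u : ℝ) (hu : 0 ≤ u) :
    ∀ j, j ≤ n → (j : ℝ) * M u ≤ tfun M u j :=
  (children hn heq hpos u hu (fun j _ => goodAll hn hneg heq hpos _)).1

lemma Bstep (hn : 2 ≤ n)
    (hneg : ∀ x : ℝ, x < 0 → M x = -x)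
    (heq : ∀ x : ℝ, 0 ≤ x → M x = tfun M x n / n)
    (hpos : ∀ x : ℝ, 0 < M x)
    (x : ℝ) (hx : 0 ≤ x) (j : ℕ) (hj1 : 1 ≤ j) (hjn : j ≤ n) :
    (j:ℝ) * tfun M x (j+1) ≤ ((j:ℝ)+1) * tfun M x j := by
  have htj := tpos hpos x j
  have hMx := hpos x
  have hG := Gglobal hn hneg heq hpos x hx j hjn
  have e1 : tfun M x (j+1) = M (x - tfun M x j) := rfl
  have hj0 : (0:ℝ) ≤ (j:ℝ) := Nat.cast_nonneg j
  rcases lt_or_ge (x - tfun M x j) 0 with hv | hv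
  · have h2 : tfun M x (j+1) = tfun M x j - x := by rw [e1, hneg _ hv]; ring
    rw [h2]
    nlinarith [mul_nonneg hj0 hx]
  · rcases le_or_gt (M (x - tfun M x j)) (tfun M x j) with h | h
    · rw [e1]
      nlinarith [mul_le_mul_of_nonneg_left h hj0]
    · have hgp := goodAll hn hneg heq hpos (x - tfun M x j) (tfun M x j) htj.le h
      rw [show x - tfun M x j + tfun M x j = x by ring] at hgp
      rw [e1, show M (x - tfun M x j) = M x + tfun M x j by linarith]
      nlinarith

lemma chain (hn : 2 ≤ n)
    (hneg : ∀ x : ℝ, x < 0 → M x = -x)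
    (heq : ∀ x : ℝ, 0 ≤ x → M x = tfun M x n / n)
    (hpos : ∀ x : ℝ, 0 < M x)
    (x : ℝ) (hx : 0 ≤ x) :
    ∀ a b : ℕ, 1 ≤ a → a ≤ b → b ≤ n →
      (a:ℝ) * tfun M x b ≤ (b:ℝ) * tfun M x a := by
  intro a b ha
  induction b with
  | zero => intro hab _; exact absurd (ha.trans hab) (by omega)
  | succ b ih =>
    intro hab hbn
    rcases Nat.lt_or_ge a (b+1) with h | h
    · have hab' : a ≤ b := by omega
      have h1 := ih hab' (by omega)
      have h2 := Bstep hn hneg heq hpos x hx b (by omega) (by omega)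
      have hb0 : (0:ℝ) < (b:ℝ) := by exact_mod_cast (by omega : 0 < b)
      have ha0 : (0:ℝ) ≤ (a:ℝ) := Nat.cast_nonneg a
      have k1 : (a:ℝ) * ((b:ℝ) * tfun M x (b+1)) ≤ (a:ℝ) * (((b:ℝ)+1) * tfun M x b) :=
        mul_le_mul_of_nonneg_left h2 ha0
      have k2 : ((b:ℝ)+1) * ((a:ℝ) * tfun M x b) ≤ ((b:ℝ)+1) * ((b:ℝ) * tfun M x a) :=
        mul_le_mul_of_nonneg_left h1 (by positivity)
      have k3 : (b:ℝ) * ((a:ℝ) * tfun M x (b+1)) ≤ (b:ℝ) * (((b:ℝ)+1) * tfun M x a) := by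
        nlinarith
      have k4 := le_of_mul_le_mul_left k3 hb0
      push_cast
      linarith
    · have haeq : a = b+1 := by omega
      subst haeq
      exact le_of_eq (by push_cast; ring)

end FuseAux

/-- For the total, positive-valued `n`-fuse function `Mₙ`: for `x ≥ 0`,
`0 ≤ i < n`, and `y` in the interval `Jᵢ(x) = [x − tᵢ(x), x + tᵢ(x)/i)`
(with right endpoint `+∞` when `i = 0`), the linear map
`lᵢˣ(y) = (i·x + tᵢ(x) + y)/(i+1)` satisfies `t_{i+1}(lᵢˣ(y)) = Mₙ(y)`. -/
theorem Mn_l_map (n : ℕ) (hn : 2 ≤ n) (M : ℝ → ℝ)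
    (hneg : ∀ x : ℝ, x < 0 → M x = -x)
    (heq : ∀ x : ℝ, 0 ≤ x → M x = tfun M x n / n)
    (hpos : ∀ x : ℝ, 0 < M x)
    (x : ℝ) (hx : 0 ≤ x) (i : ℕ) (hi : i < n) (y : ℝ)
    (hy1 : x - tfun M x i ≤ y)
    (hy2 : i = 0 ∨ y < x + tfun M x i / (i : ℝ)) :
    tfun M (((i : ℝ) * x + tfun M x i + y) / ((i : ℝ) + 1)) (i + 1) = M y := by
  rcases Nat.eq_zero_or_pos i with hi0 | hi1
  · subst hi0
    simp only [Nat.cast_zero, FuseAux.tfun_zero]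
    rw [show ((0:ℝ) * x + 1 + y) / ((0:ℝ) + 1) = 1 + y by norm_num]
    rw [FuseAux.tfun_succ, FuseAux.tfun_zero]
    norm_num
  · have hi0' : (0:ℝ) < (i:ℝ) := by exact_mod_cast hi1
    rcases hy2 with h0 | hy2'
    · omega
    set t := tfun M x i with htdef
    set z := ((i:ℝ) * x + t + y) / ((i:ℝ)+1) with hzdef
    have hip : (0:ℝ) < (i:ℝ) + 1 := by positivity
    have hiz : (i:ℝ) * z + z = (i:ℝ)*x + t + y := by
      rw [hzdef]; field_simp
    have hFuseAux.tpos : 0 < t := FuseAux.tpos hpos x i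
    have h2' : (y - x) * (i:ℝ) < t := by
      have hyd : y - x < t / (i:ℝ) := by linarith
      exact (lt_div_iff₀ hi0').mp hyd
    have hzy : y < z := by
      by_contra hc
      push_neg at hc
      have hmul : (i:ℝ) * z ≤ (i:ℝ) * y := mul_le_mul_of_nonneg_left hc hi0'.le
      nlinarith
    have hzx : x ≤ z := by
      by_contra hc
      push_neg at hc
      have hmul : (i:ℝ) * z ≤ (i:ℝ) * x := mul_le_mul_of_nonneg_left hc.le hi0'.le
      nlinarith
    have hzi : (i:ℝ) * (z - x) < t := by
      have hlin : (i:ℝ)*(z-x) = t + y - z := by linear_combination hiz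
      linarith
    have hzx0 : 0 ≤ z - x := by linarith
    have key : ∀ j, j ≤ i → tfun M z j = tfun M x j - (j:ℝ) * (z - x) := by
      intro j
      induction j with
      | zero => intro _; simp [FuseAux.tfun_zero]
      | succ j ih =>
        intro hj
        have ihj := ih (by omega)
        have e1 : tfun M x (j+1) = M (x - tfun M x j) := rfl
        have hcond : ((j:ℝ)+1) * (z - x) < M (x - tfun M x j) := by
          rw [← e1]
          have hFuseAux.chain := FuseAux.chain hn hneg heq hpos x hx (j+1) i (by omega) (by omega) (by omega)
          push_cast at hFuseAux.chain
          have hjpos : (0:ℝ) < (j:ℝ)+1 := by positivity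
          have hm : ((j:ℝ)+1) * ((i:ℝ)*(z-x)) < ((j:ℝ)+1) * t :=
            mul_lt_mul_of_pos_left hzi hjpos
          have hfin : (i:ℝ) * (((j:ℝ)+1)*(z-x)) < (i:ℝ) * tfun M x (j+1) := by
            nlinarith
          exact lt_of_mul_lt_mul_left hfin hi0'.le
        have hgp := FuseAux.goodAll hn hneg heq hpos (x - tfun M x j) (((j:ℝ)+1)*(z-x))
          (mul_nonneg (by positivity) hzx0) hcond
        rw [FuseAux.tfun_succ, ihj,
          show z - (tfun M x j - (j:ℝ)*(z-x)) = (x - tfun M x j) + ((j:ℝ)+1)*(z-x) by ring,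
          hgp, ← e1]
        push_cast; ring
    rw [FuseAux.tfun_succ, key i le_rfl]
    congr 1
    linear_combination hiz
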